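/- Let Σ₁ and Σ₂ be unit vectors in ℂ²⊗ℂ² with ⟨Σ₁, Σ₂⟩ ≠ 0 and |Σ₁⟩⟨Σ₁| ≠ |Σ₂⟩⟨Σ₂| (the two pure states are non-orthogonal and distinct). Suppose Tr₁ |Σ₁⟩⟨Σ₁| = Tr₁ |Σ₂⟩⟨Σ₂| and Tr₂ |Σ₁⟩⟨Σ₁| = Tr₂ |Σ₂⟩⟨Σ₂|. Then the common reduced state Tr₂ |Σ₁⟩⟨Σ₁| is not a rank-one matrix; equivalently, both Σ₁ and Σ₂ are entangled pure states, and (having identical reduced states) they carry equal, nonzero entanglement. That is, masking two distinct single-qubit pure non-orthogonal states requires the masked states to be equally and nontrivially entangled. -/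

import Mathlib

open Matrix Kronecker Polynomial ComplexOrder

noncomputable section

/-- Partial trace over the first subsystem of a two-qubit (4×4) matrix. -/
def ptr1 (M : Matrix (Fin 2 × Fin 2) (Fin 2 × Fin 2) ℂ) : Matrix (Fin 2) (Fin 2) ℂ :=
  Matrix.of fun j l => ∑ i, M (i, j) (i, l)

/-- Partial trace over the second subsystem of a two-qubit (4×4) matrix. -/
def ptr2 (M : Matrix (Fin 2 × Fin 2) (Fin 2 × Fin 2) ℂ) : Matrix (Fin 2) (Fin 2) ℂ :=
  Matrix.of fun i k => ∑ j, M (i, j) (k, j)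

/-- Rank-one projection |v⟩⟨v| of a qubit vector. -/
def proj2 (v : Fin 2 → ℂ) : Matrix (Fin 2) (Fin 2) ℂ :=
  Matrix.of fun i j => v i * star (v j)

/-- Rank-one projection |v⟩⟨v| of a two-qubit vector. -/
def proj4 (v : Fin 2 × Fin 2 → ℂ) : Matrix (Fin 2 × Fin 2) (Fin 2 × Fin 2) ℂ :=
  Matrix.of fun p q => v p * star (v q)

/-- Kronecker (tensor) product of two qubit vectors. -/
def tens (a b : Fin 2 → ℂ) : Fin 2 × Fin 2 → ℂ := fun p => a p.1 * b p.2

/-- Unit (normalized) vector. -/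
def UnitVec {α : Type*} [Fintype α] (v : α → ℂ) : Prop := ∑ i, v i * star (v i) = 1

/-- Hermitian inner product of two-qubit vectors. -/
def inner4 (v w : Fin 2 × Fin 2 → ℂ) : ℂ := ∑ p, star (v p) * w p

/-- A 2×2 density matrix: positive semidefinite with unit trace. -/
def IsDensity2 (A : Matrix (Fin 2) (Fin 2) ℂ) : Prop := A.PosSemidef ∧ A.trace = 1

/-- Separability of a two-qubit density matrix: a finite convex combination of
Kronecker products of 2×2 density matrices. -/
def Separable4 (ρ : Matrix (Fin 2 × Fin 2) (Fin 2 × Fin 2) ℂ) : Prop :=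
  ∃ (n : ℕ) (w : Fin n → ℝ) (A B : Fin n → Matrix (Fin 2) (Fin 2) ℂ),
    (∀ i, 0 ≤ w i) ∧ (∑ i, w i = 1) ∧
    (∀ i, IsDensity2 (A i)) ∧ (∀ i, IsDensity2 (B i)) ∧
    ρ = ∑ i, (w i : ℂ) • (A i ⊗ₖ B i)

/-- Standard basis vector e₀ of ℂ². -/
def e₀ : Fin 2 → ℂ := ![1, 0]

/-- Standard basis vector e₁ of ℂ². -/
def e₁ : Fin 2 → ℂ := ![0, 1]

/-! A pure state with a rank-one reduced state is a product vector, and the projector onto a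
normalized product vector is the Kronecker product of its two reduced states. So if both masked
states were unentangled, equal marginals would force equal projectors. -/

def coeffMatrix {m n R : Type*} (σ : m × n → R) : Matrix m n R := Matrix.of fun i j => σ (i, j)

lemma ptr2_proj4_eq_mul_conjTranspose (σ : Fin 2 × Fin 2 → ℂ) :
    ptr2 (proj4 σ) = coeffMatrix σ * (coeffMatrix σ)ᴴ := by
  ext i k
  simp [ptr2, proj4, coeffMatrix, mul_apply]

lemma det_ptr2_proj4_eq_zero_iff (σ : Fin 2 × Fin 2 → ℂ) :
    (ptr2 (proj4 σ)).det = 0 ↔ (coeffMatrix σ).det = 0 := by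
  rw [ptr2_proj4_eq_mul_conjTranspose, det_mul, det_conjTranspose, mul_eq_zero, star_eq_zero,
    or_self]

lemma rank_ptr2_proj4_eq_two {σ : Fin 2 × Fin 2 → ℂ} (h : (coeffMatrix σ).det ≠ 0) :
    (ptr2 (proj4 σ)).rank = 2 := by
  have hunit : IsUnit (ptr2 (proj4 σ)) := by
    rwa [isUnit_iff_isUnit_det, isUnit_iff_ne_zero, Ne, det_ptr2_proj4_eq_zero_iff]
  simpa using rank_of_isUnit _ hunit

lemma det_coeffMatrix_tens (a b : Fin 2 → ℂ) : (coeffMatrix (tens a b)).det = 0 := by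
  simp only [det_fin_two, coeffMatrix, tens, of_apply]
  ring

lemma exists_eq_tens_of_det_coeffMatrix_eq_zero {σ : Fin 2 × Fin 2 → ℂ}
    (h : (coeffMatrix σ).det = 0) : ∃ a b : Fin 2 → ℂ, σ = tens a b := by
  simp only [det_fin_two, coeffMatrix, of_apply, sub_eq_zero] at h
  have tens_eq {a b : Fin 2 → ℂ} (hab : ∀ i j, σ (i, j) = a i * b j) : σ = tens a b :=
    funext fun p => hab p.1 p.2
  by_cases h00 : σ (0, 0) = 0
  · by_cases h01 : σ (0, 1) = 0
    · refine ⟨![0, 1], ![σ (1, 0), σ (1, 1)], tens_eq fun i j => ?_⟩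
      fin_cases i <;> fin_cases j <;> simp [h00, h01]
    · have h10 : σ (1, 0) = 0 := by simpa [h00, h01] using h
      refine ⟨![σ (0, 1), σ (1, 1)], ![0, 1], tens_eq fun i j => ?_⟩
      fin_cases i <;> fin_cases j <;> simp [h00, h10]
  · refine ⟨![σ (0, 0), σ (1, 0)], ![1, σ (0, 1) / σ (0, 0)], tens_eq fun i j => ?_⟩
    fin_cases i <;> fin_cases j <;> simp
    · field_simp
    · field_simp
      linear_combination h

lemma proj4_tens_eq_kronecker {a b : Fin 2 → ℂ} (h : UnitVec (tens a b)) :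
    proj4 (tens a b) = ptr2 (proj4 (tens a b)) ⊗ₖ ptr1 (proj4 (tens a b)) := by
  simp only [UnitVec, Fintype.sum_prod_type, Fin.sum_univ_two, tens, star_mul'] at h
  ext ⟨i, j⟩ ⟨k, l⟩
  simp only [proj4, ptr2, ptr1, kroneckerMap_apply, of_apply, Fin.sum_univ_two, tens, star_mul']
  linear_combination (-(a i * b j * star (a k) * star (b l))) * h

lemma proj4_eq_kronecker_of_det_coeffMatrix_eq_zero {σ : Fin 2 × Fin 2 → ℂ} (hσ : UnitVec σ)
    (h : (coeffMatrix σ).det = 0) : proj4 σ = ptr2 (proj4 σ) ⊗ₖ ptr1 (proj4 σ) := by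
  obtain ⟨a, b, rfl⟩ := exists_eq_tens_of_det_coeffMatrix_eq_zero h
  exact proj4_tens_eq_kronecker hσ

theorem masking_nonorthogonal_states_requires_equal_nonzero_entanglement_general
    (σ₁ σ₂ : Fin 2 × Fin 2 → ℂ)
    (h₁ : UnitVec σ₁) (h₂ : UnitVec σ₂)
    (hdist : proj4 σ₁ ≠ proj4 σ₂)
    (hmask1 : ptr1 (proj4 σ₁) = ptr1 (proj4 σ₂))
    (hmask2 : ptr2 (proj4 σ₁) = ptr2 (proj4 σ₂)) :
    (ptr2 (proj4 σ₁)).rank ≠ 1 ∧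
    (ptr2 (proj4 σ₁)).rank = 2 ∧ (ptr2 (proj4 σ₂)).rank = 2 ∧
    (¬ ∃ a b : Fin 2 → ℂ, σ₁ = tens a b) ∧
    (¬ ∃ a b : Fin 2 → ℂ, σ₂ = tens a b) := by
  have hdet_iff : (coeffMatrix σ₁).det = 0 ↔ (coeffMatrix σ₂).det = 0 := by
    rw [← det_ptr2_proj4_eq_zero_iff, hmask2, det_ptr2_proj4_eq_zero_iff]
  have hdet₁ : (coeffMatrix σ₁).det ≠ 0 := by
    intro h₀
    apply hdist
    rw [proj4_eq_kronecker_of_det_coeffMatrix_eq_zero h₁ h₀,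
      proj4_eq_kronecker_of_det_coeffMatrix_eq_zero h₂ (hdet_iff.mp h₀), hmask1, hmask2]
  have hdet₂ : (coeffMatrix σ₂).det ≠ 0 := mt hdet_iff.mpr hdet₁
  have hrank₁ := rank_ptr2_proj4_eq_two hdet₁
  refine ⟨by omega, hrank₁, rank_ptr2_proj4_eq_two hdet₂, ?_, ?_⟩ <;> rintro ⟨a, b, rfl⟩
  exacts [hdet₁ (det_coeffMatrix_tens a b), hdet₂ (det_coeffMatrix_tens a b)]

/-- two distinct non-orthogonal pure two-qubit states that mask each
other must both be entangled: the common reduced state is not rank one (it has rank 2),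
and neither state is a product vector; having identical reduced states, they carry
equal, nonzero entanglement. -/
theorem masking_nonorthogonal_states_requires_equal_nonzero_entanglement
    (σ₁ σ₂ : Fin 2 × Fin 2 → ℂ)
    (h₁ : UnitVec σ₁) (h₂ : UnitVec σ₂)
    (hnonorth : inner4 σ₁ σ₂ ≠ 0)
    (hdist : proj4 σ₁ ≠ proj4 σ₂)
    (hmask1 : ptr1 (proj4 σ₁) = ptr1 (proj4 σ₂))
    (hmask2 : ptr2 (proj4 σ₁) = ptr2 (proj4 σ₂)) :
    (ptr2 (proj4 σ₁)).rank ≠ 1 ∧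
    (ptr2 (proj4 σ₁)).rank = 2 ∧ (ptr2 (proj4 σ₂)).rank = 2 ∧
    (¬ ∃ a b : Fin 2 → ℂ, σ₁ = tens a b) ∧
    (¬ ∃ a b : Fin 2 → ℂ, σ₂ = tens a b) :=
  masking_nonorthogonal_states_requires_equal_nonzero_entanglement_general σ₁ σ₂ h₁ h₂ hdist hmask1
    hmask2

end
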